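/- Assume κ = κ̂ and 0 < λ < 1, and denote by F_C, F_V, G_C, G_V the partial derivatives of F and G at P₈ = (V₊, 1+V₊). Then G_V + G_C = m C₈ √Q > 0 and F_V + F_C = -((γ-1)/2)(G_V + G_C) < 0, where C₈ = 1+V₊; consequently F_V < -F_C < 0. -/

import Mathlib

/-! In the isentropic case `α = 0`, so `F` is a polynomial. Squaring `√Q = 2V₊ - a` shows that
`V₊` is a root of `m(γ-1)V² - ((γ-3)(λ-1) - m(γ-1))V + 2(λ-1)`. Along the line `C = 1 + V` one has
`F_V + F_C = -((γ-1)/2)(G_V + G_C)` identically; reducing with the quadratic gives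
`G_V + G_C = m C₈ √Q` and `F_C = 2 C₈²`, and `C₈ > 0` because `Q - (a+2)² = 4(1-λ)/m > 0`. -/

noncomputable section

/-- `V_* = (κ - 2(λ-1))/(nγ)` -/
def Vstar (n γ lam κ : ℝ) : ℝ := (κ - 2*(lam - 1)) / (n*γ)

/-- `α = (κ(γ-1) + 2(λ-1))/(2γ)` -/
def alphaP (γ lam κ : ℝ) : ℝ := (κ*(γ - 1) + 2*(lam - 1)) / (2*γ)

/-- `k₁ = 1 + (n-1)(γ-1)/2` -/
def K1 (n γ : ℝ) : ℝ := 1 + (n - 1)*(γ - 1)/2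

/-- `k₂ = ((n-1)(γ-1) + (γ-3)(λ-1))/2` -/
def K2 (n γ lam : ℝ) : ℝ := ((n - 1)*(γ - 1) + (γ - 3)*(lam - 1)) / 2

/-- `k₃ = (γ-1)(λ-1)/2` -/
def K3 (γ lam : ℝ) : ℝ := (γ - 1)*(lam - 1)/2

/-- `G(V,C) = nC²(V - V_*) - V(1+V)(λ+V)` -/
def Gf (n γ lam κ V C : ℝ) : ℝ := n*C^2*(V - Vstar n γ lam κ) - V*(1+V)*(lam+V)

/-- `F(V,C) = C[C²(1 + α/(1+V)) - k₁(1+V)² + k₂(1+V) - k₃]` -/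
def Ff (n γ lam κ V C : ℝ) : ℝ :=
  C*(C^2*(1 + alphaP γ lam κ/(1+V)) - K1 n γ*(1+V)^2 + K2 n γ lam*(1+V) - K3 γ lam)

/-- The isentropic exponent `κ̂ = 2(1-λ)/(γ-1)`. -/
def khat (γ lam : ℝ) : ℝ := 2*(1 - lam)/(γ - 1)

/-- `a = ((γ-3)/(m(γ-1)))μ - 1`, with `m = n-1`, `μ = λ-1`. -/
def aIs (n γ lam : ℝ) : ℝ := ((γ - 3)/((n-1)*(γ - 1)))*(lam - 1) - 1

/-- `Q = ((γ-3)/(m(γ-1)))²μ² - 2((γ+1)/(m(γ-1)))μ + 1`. -/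
def QIs (n γ lam : ℝ) : ℝ :=
  ((γ - 3)/((n-1)*(γ - 1)))^2*(lam - 1)^2 - 2*((γ + 1)/((n-1)*(γ - 1)))*(lam - 1) + 1

/-- `V₊ = (a + √Q)/2` in the isentropic case `κ = κ̂`. -/
def VpIs (n γ lam : ℝ) : ℝ := (aIs n γ lam + Real.sqrt (QIs n γ lam))/2

/-- `V₋ = (a - √Q)/2` in the isentropic case `κ = κ̂`. -/
def VmIs (n γ lam : ℝ) : ℝ := (aIs n γ lam - Real.sqrt (QIs n γ lam))/2

/-- `F_C`: the partial derivative `∂F/∂C` at `P₈ = (V₊, 1+V₊)`, with `κ = κ̂`. -/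
def FCd (n γ lam : ℝ) : ℝ :=
  deriv (fun C => Ff n γ lam (khat γ lam) (VpIs n γ lam) C) (1 + VpIs n γ lam)

/-- `F_V`: the partial derivative `∂F/∂V` at `P₈ = (V₊, 1+V₊)`, with `κ = κ̂`. -/
def FVd (n γ lam : ℝ) : ℝ :=
  deriv (fun V => Ff n γ lam (khat γ lam) V (1 + VpIs n γ lam)) (VpIs n γ lam)

/-- `G_C`: the partial derivative `∂G/∂C` at `P₈ = (V₊, 1+V₊)`, with `κ = κ̂`. -/
def GCd (n γ lam : ℝ) : ℝ :=
  deriv (fun C => Gf n γ lam (khat γ lam) (VpIs n γ lam) C) (1 + VpIs n γ lam)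

/-- `G_V`: the partial derivative `∂G/∂V` at `P₈ = (V₊, 1+V₊)`, with `κ = κ̂`. -/
def GVd (n γ lam : ℝ) : ℝ :=
  deriv (fun V => Gf n γ lam (khat γ lam) V (1 + VpIs n γ lam)) (VpIs n γ lam)

lemma hasDerivAt_Gf_C (n γ lam κ V C : ℝ) :
    HasDerivAt (fun C => Gf n γ lam κ V C) (2*n*C*(V - Vstar n γ lam κ)) C :=
  ((((hasDerivAt_pow 2 C).const_mul n).mul_const (V - Vstar n γ lam κ)).sub_const
    (V*(1+V)*(lam+V))).congr_deriv (by push_cast; ring)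

lemma hasDerivAt_Gf_V (n γ lam κ V C : ℝ) :
    HasDerivAt (fun V => Gf n γ lam κ V C)
      (n*C^2 - ((1+V)*(lam+V) + V*(lam+V) + V*(1+V))) V := by
  have hV := hasDerivAt_id' V
  exact (((hV.sub_const (Vstar n γ lam κ)).const_mul (n*C^2)).sub
    ((hV.mul (hV.const_add 1)).mul (hV.const_add lam))).congr_deriv
    (by simp only [Pi.mul_apply]; ring)

lemma alphaP_khat {γ : ℝ} (hγ : γ ≠ 1) (lam : ℝ) : alphaP γ lam (khat γ lam) = 0 := by
  have : γ - 1 ≠ 0 := sub_ne_zero.mpr hγ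
  unfold alphaP khat
  field_simp
  ring

lemma Ff_khat {γ : ℝ} (hγ : γ ≠ 1) (n lam V C : ℝ) :
    Ff n γ lam (khat γ lam) V C
      = C*(C^2 - K1 n γ*(1+V)^2 + K2 n γ lam*(1+V) - K3 γ lam) := by
  rw [Ff, alphaP_khat hγ, zero_div, add_zero, mul_one]

lemma hasDerivAt_Ff_khat_C {γ : ℝ} (hγ : γ ≠ 1) (n lam V C : ℝ) :
    HasDerivAt (fun C => Ff n γ lam (khat γ lam) V C)
      (3*C^2 - (K1 n γ*(1+V)^2 - K2 n γ lam*(1+V) + K3 γ lam)) C := by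
  simp only [Ff_khat hγ]
  exact ((hasDerivAt_id' C).mul ((((hasDerivAt_pow 2 C).sub_const _).add_const _).sub_const _))
    |>.congr_deriv (by push_cast; ring)

lemma hasDerivAt_Ff_khat_V {γ : ℝ} (hγ : γ ≠ 1) (n lam V C : ℝ) :
    HasDerivAt (fun V => Ff n γ lam (khat γ lam) V C)
      (-C*(2*K1 n γ*(1+V) - K2 n γ lam)) V := by
  simp only [Ff_khat hγ]
  have hV := (hasDerivAt_id' V).const_add 1
  exact (((((hV.pow 2).const_mul (K1 n γ)).const_sub (C^2)).add
    (hV.const_mul (K2 n γ lam))).sub_const (K3 γ lam) |>.const_mul C).congr_deriv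
    (by push_cast; ring)

lemma Vstar_khat {γ : ℝ} (hγ : 1 < γ) (n lam : ℝ) :
    Vstar n γ lam (khat γ lam) = 2*(1 - lam)/(n*(γ - 1)) := by
  have : γ - 1 ≠ 0 := by linarith
  have : γ ≠ 0 := by linarith
  unfold Vstar khat
  field_simp
  ring

section VpIs

variable {n γ lam : ℝ}

lemma QIs_eq (hn : 1 < n) (hγ : 1 < γ) :
    QIs n γ lam = (aIs n γ lam + 2)^2 + 4*(1 - lam)/(n - 1) := by
  have : n - 1 ≠ 0 := by linarith
  have : γ - 1 ≠ 0 := by linarith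
  unfold QIs aIs
  field_simp
  ring

lemma QIs_pos (hn : 1 < n) (hγ : 1 < γ) (hlam : lam < 1) : 0 < QIs n γ lam := by
  rw [QIs_eq hn hγ]
  have : 0 < 4*(1 - lam)/(n - 1) := div_pos (by linarith) (by linarith)
  positivity

lemma sqrt_QIs_eq : Real.sqrt (QIs n γ lam) = 2*VpIs n γ lam - aIs n γ lam := by
  unfold VpIs
  ring

lemma one_add_VpIs_pos (hn : 1 < n) (hγ : 1 < γ) (hlam : lam < 1) : 0 < 1 + VpIs n γ lam := by
  have hsq : (-(aIs n γ lam + 2))^2 < QIs n γ lam := by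
    rw [QIs_eq hn hγ, neg_sq, lt_add_iff_pos_right]
    exact div_pos (by linarith) (by linarith)
  have := Real.lt_sqrt_of_sq_lt hsq
  unfold VpIs
  linarith

lemma VpIs_quadratic (hn : 1 < n) (hγ : 1 < γ) (hlam : lam < 1) :
    (n - 1)*(γ - 1)*VpIs n γ lam^2
      = ((γ - 3)*(lam - 1) - (n - 1)*(γ - 1))*VpIs n γ lam - 2*(lam - 1) := by
  have hm : n - 1 ≠ 0 := by linarith
  have hg : γ - 1 ≠ 0 := by linarith
  have hs := Real.sq_sqrt (QIs_pos hn hγ hlam).le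
  rw [sqrt_QIs_eq, QIs_eq hn hγ] at hs
  unfold aIs at hs
  field_simp at hs
  refine mul_left_cancel₀ (mul_ne_zero hm hg) ?_
  linear_combination hs / 4

lemma GVd_add_GCd (hn : 1 < n) (hγ : 1 < γ) (hlam : lam < 1) :
    GVd n γ lam + GCd n γ lam = (n - 1)*(1 + VpIs n γ lam)*Real.sqrt (QIs n γ lam) := by
  have hm : n - 1 ≠ 0 := by linarith
  have hg : γ - 1 ≠ 0 := by linarith
  have hn0 : n ≠ 0 := by linarith
  have hq := VpIs_quadratic hn hγ hlam
  rw [GVd, GCd, (hasDerivAt_Gf_V ..).deriv, (hasDerivAt_Gf_C ..).deriv, Vstar_khat hγ,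
    sqrt_QIs_eq]
  unfold aIs
  field_simp
  linear_combination hq

lemma FVd_add_FCd (hn : n ≠ 0) (hγ : 1 < γ) :
    FVd n γ lam + FCd n γ lam = -((γ - 1)/2)*(GVd n γ lam + GCd n γ lam) := by
  have hg : γ - 1 ≠ 0 := by linarith
  rw [FVd, FCd, GVd, GCd, (hasDerivAt_Ff_khat_V hγ.ne' ..).deriv,
    (hasDerivAt_Ff_khat_C hγ.ne' ..).deriv, (hasDerivAt_Gf_V ..).deriv,
    (hasDerivAt_Gf_C ..).deriv, Vstar_khat hγ]
  unfold K1 K2 K3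
  field_simp
  ring

lemma FCd_eq (hn : 1 < n) (hγ : 1 < γ) (hlam : lam < 1) :
    FCd n γ lam = 2*(1 + VpIs n γ lam)^2 := by
  rw [FCd, (hasDerivAt_Ff_khat_C hγ.ne' ..).deriv]
  unfold K1 K2 K3
  linear_combination (-1/2 : ℝ) * VpIs_quadratic hn hγ hlam

end VpIs

theorem stmt_14_general (n γ lam : ℝ) (hn : n = 2 ∨ n = 3) (hγ : 1 < γ)
    (h1 : lam < 1) :
    let C8 := 1 + VpIs n γ lam
    GVd n γ lam + GCd n γ lam = (n-1)*C8*Real.sqrt (QIs n γ lam) ∧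
    0 < GVd n γ lam + GCd n γ lam ∧
    FVd n γ lam + FCd n γ lam = -((γ-1)/2)*(GVd n γ lam + GCd n γ lam) ∧
    FVd n γ lam + FCd n γ lam < 0 ∧
    FVd n γ lam < -FCd n γ lam ∧ -FCd n γ lam < 0 := by
  intro C8
  have hn1 : 1 < n := by rcases hn with rfl | rfl <;> norm_num
  have hC8 : 0 < C8 := one_add_VpIs_pos hn1 hγ h1
  have hG := GVd_add_GCd hn1 hγ h1
  have hGpos : 0 < GVd n γ lam + GCd n γ lam := by
    rw [hG]
    exact mul_pos (mul_pos (by linarith) hC8) (Real.sqrt_pos.2 (QIs_pos hn1 hγ h1))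
  have hF := FVd_add_FCd (n := n) (lam := lam) (by linarith) hγ
  have hFneg : FVd n γ lam + FCd n γ lam < 0 := by
    rw [hF, neg_mul, neg_lt_zero]
    exact mul_pos (by linarith) hGpos
  have hFC : 0 < FCd n γ lam := by
    rw [FCd_eq hn1 hγ h1]
    positivity
  exact ⟨hG, hGpos, hF, hFneg, by linarith, by linarith⟩

/-- with `κ = κ̂` and `0 < λ < 1`, at `P₈ = (V₊, 1+V₊)`:
`G_V + G_C = mC₈√Q > 0`, `F_V + F_C = -((γ-1)/2)(G_V + G_C) < 0`, hence `F_V < -F_C < 0`. -/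
theorem stmt_14 (n γ lam : ℝ) (hn : n = 2 ∨ n = 3) (hγ : 1 < γ)
    (h0 : 0 < lam) (h1 : lam < 1) :
    let C8 := 1 + VpIs n γ lam
    GVd n γ lam + GCd n γ lam = (n-1)*C8*Real.sqrt (QIs n γ lam) ∧
    0 < GVd n γ lam + GCd n γ lam ∧
    FVd n γ lam + FCd n γ lam = -((γ-1)/2)*(GVd n γ lam + GCd n γ lam) ∧
    FVd n γ lam + FCd n γ lam < 0 ∧
    FVd n γ lam < -FCd n γ lam ∧ -FCd n γ lam < 0 :=
  stmt_14_general n γ lam hn hγ h1
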